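/- arXiv:2602.10430 — 3 statements merged into one kernel-verified Lean document; each statement's English description precedes it below -/
import Mathlib

section
/- Consider a finite probability space with outcomes i = 1,…,n having probabilities p_i > 0 and rewards R_i. For κ ∈ (0,1], the linear program max Σ w_i p_i R_i subject to 0 ≤ w_i ≤ 1/κ and Σ w_i p_i = 1 has an optimal solution of hard-threshold form: there exists a threshold λ such that w_i* = 1/κ for outcomes with R_i > λ, w_i* = 0 for outcomes with R_i < λ, and the optimal value equals the conditional expectation of R over the top-κ mass of the distribution (the optimistic CVaR at level κ). -/
/-!
The bathtub principle: for every feasible `v`, `(w i - v i) * (R i - λ) ≥ 0` pointwise when `w`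
saturates the upper bound above the threshold `λ` and vanishes below it, and summing this against
`p` (both `v` and `w` carry the same mass) shows `w` is optimal. Such a `w` exists once `λ` is a
`κ`-quantile of `R` under `p`, i.e. the mass strictly above `λ` is less than `κ` and the mass
at or above `λ` is at least `κ`; the atom at `λ` then receives the remaining mass. On the
threshold weights `w i * (R i - λ) = (1 / κ) * max (R i - λ) 0`, which gives the value.
-/

open Finset

section

variable {ι : Type*} [Fintype ι]

def IsThresholdAt (u lam : ℝ) (R w : ι → ℝ) : Prop :=
  (∀ i, lam < R i → w i = u) ∧ (∀ i, R i < lam → w i = 0)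

theorem IsThresholdAt.sum_mul_le {u lam : ℝ} {p R w v : ι → ℝ} (hw : IsThresholdAt u lam R w)
    (hp : ∀ i, 0 ≤ p i) (hv : ∀ i, 0 ≤ v i ∧ v i ≤ u)
    (hmass : ∑ i, v i * p i = ∑ i, w i * p i) :
    ∑ i, v i * p i * R i ≤ ∑ i, w i * p i * R i := by
  have hpointwise : ∀ i, 0 ≤ (w i - v i) * (R i - lam) * p i := by
    intro i
    refine mul_nonneg ?_ (hp i)
    rcases lt_trichotomy (R i) lam with h | h | h
    · rw [hw.2 i h]
      exact mul_nonneg_of_nonpos_of_nonpos (by linarith [hv i]) (by linarith)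
    · simp [h]
    · rw [hw.1 i h]
      exact mul_nonneg (by linarith [hv i]) (by linarith)
  have hexpand : ∑ i, (w i - v i) * (R i - lam) * p i =
      (∑ i, w i * p i * R i - ∑ i, v i * p i * R i) -
        lam * (∑ i, w i * p i - ∑ i, v i * p i) := by
    simp only [mul_sum, ← sum_sub_distrib]
    exact sum_congr rfl fun i _ => by ring
  rw [hmass, sub_self, mul_zero, sub_zero] at hexpand
  linarith [sum_nonneg fun i (_ : i ∈ univ) => hpointwise i]

theorem IsThresholdAt.sum_mul_eq {u lam : ℝ} {R w : ι → ℝ} (hw : IsThresholdAt u lam R w)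
    (p : ι → ℝ) :
    ∑ i, w i * p i * R i = lam * ∑ i, w i * p i + u * ∑ i, p i * max (R i - lam) 0 := by
  rw [mul_sum, mul_sum, ← sum_add_distrib]
  refine sum_congr rfl fun i _ => ?_
  have hexcess : w i * (R i - lam) = u * max (R i - lam) 0 := by
    rcases lt_trichotomy (R i) lam with h | h | h
    · rw [hw.2 i h, max_eq_right (by linarith)]
      ring
    · simp [h]
    · rw [hw.1 i h, max_eq_left (by linarith)]
  linear_combination p i * hexcess

theorem exists_quantile (p R : ι → ℝ) {κ : ℝ} (hκ : 0 < κ) (hκp : κ ≤ ∑ i, p i) :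
    ∃ lam, ∑ i with lam < R i, p i < κ ∧ κ ≤ ∑ i with lam ≤ R i, p i := by
  obtain ⟨j₀, -, hj₀⟩ :=
    exists_min_image univ R (nonempty_of_sum_ne_zero (hκ.trans_le hκp).ne')
  have hcand : (univ.filter fun j => κ ≤ ∑ i with R j ≤ R i, p i).Nonempty :=
    ⟨j₀, by simpa [hj₀] using hκp⟩
  obtain ⟨j, hj, hjmax⟩ := exists_max_image _ R hcand
  refine ⟨R j, ?_, (mem_filter.1 hj).2⟩
  obtain hU | hU := (univ.filter fun i => R j < R i).eq_empty_or_nonempty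
  · rw [hU, sum_empty]
    exact hκ
  obtain ⟨k, hk, hkmin⟩ := exists_min_image _ R hU
  have hjk : R j < R k := (mem_filter.1 hk).2
  have habove : (univ.filter fun i => R j < R i) = univ.filter fun i => R k ≤ R i := by
    ext i
    simp only [mem_filter, mem_univ, true_and]
    exact ⟨fun h => hkmin i (by simpa using h), hjk.trans_le⟩
  rw [habove]
  by_contra! h
  exact (hjmax k (by simpa using h)).not_gt hjk

theorem exists_isThresholdAt_weights (p R : ι → ℝ) {κ : ℝ} (hκ : 0 < κ)
    (hκp : κ ≤ ∑ i, p i) :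
    ∃ (w : ι → ℝ) (lam : ℝ), (∀ i, 0 ≤ w i ∧ w i ≤ 1 / κ) ∧ ∑ i, w i * p i = 1 ∧
      IsThresholdAt (1 / κ) lam R w := by
  obtain ⟨lam, hlt, hle⟩ := exists_quantile p R hκ hκp
  set a := ∑ i with lam < R i, p i
  set b := ∑ i with R i = lam, p i
  have hab : ∑ i with lam ≤ R i, p i = a + b := by
    simp only [a, b, sum_filter, ← sum_add_distrib]
    refine sum_congr rfl fun i _ => ?_
    rcases lt_trichotomy lam (R i) with h | h | h
    · simp [h.le, h, h.ne']
    · simp [h]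
    · simp [h.not_ge, h.not_gt, h.ne]
  have hb : 0 < b := by linarith
  -- the atom at `lam` carries the mass `κ - a` missing from the outcomes above it
  set c := (κ - a) / (κ * b)
  have hc0 : 0 ≤ c := div_nonneg (by linarith) (by positivity)
  have hc1 : c ≤ 1 / κ := by
    rw [div_le_div_iff₀ (by positivity) hκ]
    nlinarith
  refine ⟨fun i => (if lam < R i then 1 / κ else 0) + (if R i = lam then c else 0), lam,
    fun i => ?_, ?_, fun i h => by simp [h, h.ne'], fun i h => by simp [h.not_gt, h.ne]⟩
  · rcases lt_trichotomy lam (R i) with h | h | h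
    · simp [h, h.ne', hκ.le]
    · simpa [h, hc0] using hc1
    · simp [h.not_gt, h.ne, hκ.le]
  · simp only [add_mul, sum_add_distrib, ite_mul, zero_mul, ← sum_filter, ← mul_sum, c]
    field_simp
    ring

end

/-- the optimistic-DRO linear program
`max Σ wᵢ pᵢ Rᵢ  s.t.  0 ≤ wᵢ ≤ 1/κ, Σ wᵢ pᵢ = 1`
on a finite probability space admits an optimal solution of hard-threshold
form: `w* = 1/κ` above a threshold `λ`, `w* = 0` below it, and its value is the
optimistic CVaR at level `κ` (the Rockafellar–Uryasev expression at `λ`). -/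
theorem optimistic_dro_hard_threshold {n : ℕ}
    (p R : Fin n → ℝ) (hp : ∀ i, 0 < p i) (hsum : ∑ i, p i = 1)
    (κ : ℝ) (hκ0 : 0 < κ) (hκ1 : κ ≤ 1) :
    ∃ (w : Fin n → ℝ) (lam : ℝ),
      (∀ i, 0 ≤ w i ∧ w i ≤ 1 / κ) ∧
      (∑ i, w i * p i = 1) ∧
      (∀ v : Fin n → ℝ, (∀ i, 0 ≤ v i ∧ v i ≤ 1 / κ) → (∑ i, v i * p i = 1) →
        ∑ i, v i * p i * R i ≤ ∑ i, w i * p i * R i) ∧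
      (∀ i, lam < R i → w i = 1 / κ) ∧
      (∀ i, R i < lam → w i = 0) ∧
      (∑ i, w i * p i * R i = lam + (1 / κ) * ∑ i, p i * max (R i - lam) 0) := by
  obtain ⟨w, lam, hbounds, hmass, hw⟩ :=
    exists_isThresholdAt_weights p R hκ0 (hsum ▸ hκ1)
  refine ⟨w, lam, hbounds, hmass, fun v hv hvmass => ?_, hw.1, hw.2, ?_⟩
  · exact hw.sum_mul_le (fun i => (hp i).le) hv (hvmass.trans hmass.symm)
  · rw [hw.sum_mul_eq, hmass, mul_one]
end

section
/- For a real random variable R on a finite probability space and κ ∈ (0,1], strong duality holds: max { E_Q[R] : dQ/dP ≤ 1/κ, Q a probability measure } = min_{ν ∈ ℝ} { ν + (1/κ)·E_P[(R - ν)₊] }, where (x)₊ = max(x, 0). -/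
/-!
Every primal-feasible density `v` and every `ν` satisfy
`E_P[v R] ≤ ν + (1/κ) E_P[(R - ν)₊]`, by the pointwise bound
`v (R - ν) ≤ v (R - ν)₊ ≤ (1/κ) (R - ν)₊`. Both bounds are equalities when
`v = 1/κ` on `{R > ν}` and `v = 0` on `{R < ν}` (complementary slackness). Taking `ν` an upper
`κ`-quantile of `R`, so that `P(R > ν) ≤ κ ≤ P(R ≥ ν)`, such a `v` with total mass one exists:
it puts the missing mass on `{R = ν}`.
-/

open Finset

variable {ι : Type*} [Fintype ι]

noncomputable def cvarDual (p R : ι → ℝ) (κ ν : ℝ) : ℝ :=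
  ν + (1 / κ) * ∑ i, p i * max (R i - ν) 0

section Duality

variable (p R : ι → ℝ) {κ : ℝ}

theorem sum_mul_le_cvarDual (hp : ∀ i, 0 ≤ p i) {v : ι → ℝ}
    (hv : ∀ i, 0 ≤ v i ∧ v i ≤ 1 / κ) (hv1 : ∑ i, v i * p i = 1) (ν : ℝ) :
    ∑ i, v i * p i * R i ≤ cvarDual p R κ ν := by
  have key (i : ι) :
      v i * p i * R i ≤ 1 / κ * (p i * max (R i - ν) 0) + ν * (v i * p i) := by
    have hvp : 0 ≤ v i * p i := mul_nonneg (hv i).1 (hp i)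
    calc v i * p i * R i = v i * p i * (R i - ν) + ν * (v i * p i) := by ring
      _ ≤ v i * p i * max (R i - ν) 0 + ν * (v i * p i) := by gcongr; exact le_max_left (R i - ν) 0
      _ ≤ 1 / κ * p i * max (R i - ν) 0 + ν * (v i * p i) := by
          gcongr
          exacts [hp i, (hv i).2]
      _ = 1 / κ * (p i * max (R i - ν) 0) + ν * (v i * p i) := by ring
  calc ∑ i, v i * p i * R i
      ≤ ∑ i, (1 / κ * (p i * max (R i - ν) 0) + ν * (v i * p i)) := sum_le_sum fun i _ => key i
    _ = cvarDual p R κ ν := by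
        rw [sum_add_distrib, ← mul_sum, ← mul_sum, hv1, cvarDual]; ring

theorem sum_mul_eq_cvarDual {ν : ℝ} {w : ι → ℝ} (hw_gt : ∀ i, ν < R i → w i = 1 / κ)
    (hw_lt : ∀ i, R i < ν → w i = 0) (hw1 : ∑ i, w i * p i = 1) :
    ∑ i, w i * p i * R i = cvarDual p R κ ν := by
  have key (i : ι) :
      w i * p i * R i = 1 / κ * (p i * max (R i - ν) 0) + ν * (w i * p i) := by
    rcases lt_trichotomy (R i) ν with h | h | h
    · rw [hw_lt i h, max_eq_right (by linarith)]; ring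
    · rw [h, sub_self, max_self]; ring
    · rw [hw_gt i h, max_eq_left (by linarith)]; ring
  rw [sum_congr rfl fun i _ => key i, sum_add_distrib, ← mul_sum, ← mul_sum, hw1, cvarDual]
  ring

theorem exists_upper_quantile (hp : ∀ i, 0 ≤ p i) (hκ0 : 0 < κ) (hκ : κ ≤ ∑ i, p i) :
    ∃ ν, ∑ i with ν < R i, p i ≤ κ ∧ κ ≤ ∑ i with ν ≤ R i, p i := by
  obtain ⟨i₀, -, hi₀⟩ := exists_min_image univ R (nonempty_of_sum_ne_zero (hκ0.trans_le hκ).ne')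
  -- `ν` is the largest value `R i` with `κ ≤ P(R ≥ R i)`.
  set S : Finset ι := {i | κ ≤ ∑ j with R i ≤ R j, p j}
  have hi₀S : i₀ ∈ S := by
    simpa [S, filter_true_of_mem fun j _ => hi₀ j (mem_univ j)] using hκ
  obtain ⟨i₁, hi₁S, hi₁⟩ := exists_max_image S R ⟨i₀, hi₀S⟩
  refine ⟨R i₁, ?_, (mem_filter.1 hi₁S).2⟩
  by_contra! hgt
  obtain ⟨j, hj, hj_min⟩ := exists_min_image _ R (nonempty_of_sum_ne_zero (hκ0.trans hgt).ne')
  have hjS : j ∈ S := by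
    refine mem_filter.2 ⟨mem_univ j, hgt.le.trans ?_⟩
    refine sum_le_sum_of_subset_of_nonneg (fun i hi => ?_) fun i _ _ => hp i
    exact mem_filter.2 ⟨mem_univ i, hj_min i hi⟩
  exact (mem_filter.1 hj).2.not_ge (hi₁ j hjS)

theorem exists_density_between {s t : Finset ι} (hst : s ⊆ t) (hκ0 : 0 < κ)
    (hs : ∑ i ∈ s, p i ≤ κ) (ht : κ ≤ ∑ i ∈ t, p i) :
    ∃ w : ι → ℝ, (∀ i ∈ s, w i = 1 / κ) ∧ (∀ i ∉ t, w i = 0) ∧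
      (∀ i, 0 ≤ w i ∧ w i ≤ 1 / κ) ∧ ∑ i, w i * p i = 1 := by
  classical
  obtain ⟨θ, hθ0, hθ1, hθ⟩ :
      ∃ θ : ℝ, 0 ≤ θ ∧ θ ≤ 1 ∧ ∑ i ∈ s, p i + θ * ∑ i ∈ t \ s, p i = κ := by
    rw [sum_sdiff_eq_sub hst]
    rcases (hs.trans ht).eq_or_lt with h | h
    · exact ⟨0, le_rfl, zero_le_one, by linarith⟩
    · refine ⟨(κ - ∑ i ∈ s, p i) / (∑ i ∈ t, p i - ∑ i ∈ s, p i),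
        div_nonneg (by linarith) (by linarith), div_le_one_of_le₀ (by linarith) (by linarith), ?_⟩
      rw [div_mul_cancel₀ _ (sub_ne_zero.2 h.ne')]
      ring
  let w : ι → ℝ := fun i => if i ∈ s then 1 / κ else if i ∈ t then θ / κ else 0
  refine ⟨w, fun i hi => if_pos hi, fun i hi => ?_, fun i => ?_, ?_⟩
  · simp only [w, if_neg hi, if_neg (mt (@hst i) hi)]
  · have : θ / κ ≤ 1 / κ := by gcongr
    simp only [w]
    split_ifs <;> constructor <;> first | positivity | linarith
  · calc ∑ i, w i * p i
        = ∑ i, ((if i ∈ s then p i else 0) + θ * if i ∈ t \ s then p i else 0) / κ := by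
          refine sum_congr rfl fun i _ => ?_
          by_cases his : i ∈ s <;> by_cases hit : i ∈ t <;> simp [w, his, hit] <;> ring
      _ = (∑ i ∈ s, p i + θ * ∑ i ∈ t \ s, p i) / κ := by
          rw [← sum_div, sum_add_distrib, ← mul_sum, sum_ite_mem, sum_ite_mem, univ_inter,
            univ_inter]
      _ = 1 := by rw [hθ, div_self hκ0.ne']

end Duality

/-- strong duality for optimistic CVaR on a finite probability
space:
`max { E_Q[R] : dQ/dP ≤ 1/κ } = min_ν { ν + (1/κ)·E_P[(R - ν)₊] }`.
We express it by exhibiting a primal-feasible `w` and a dual point `ν` with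
equal values, each optimal for its own problem. -/
theorem optimistic_cvar_strong_duality {n : ℕ}
    (p R : Fin n → ℝ) (hp : ∀ i, 0 < p i) (hsum : ∑ i, p i = 1)
    (κ : ℝ) (hκ0 : 0 < κ) (hκ1 : κ ≤ 1) :
    ∃ (w : Fin n → ℝ) (ν : ℝ),
      (∀ i, 0 ≤ w i ∧ w i ≤ 1 / κ) ∧ (∑ i, w i * p i = 1) ∧
      (∀ v : Fin n → ℝ, (∀ i, 0 ≤ v i ∧ v i ≤ 1 / κ) → (∑ i, v i * p i = 1) →
        ∑ i, v i * p i * R i ≤ ∑ i, w i * p i * R i) ∧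
      (∑ i, w i * p i * R i = ν + (1 / κ) * ∑ i, p i * max (R i - ν) 0) ∧
      (∀ ν' : ℝ,
        ν + (1 / κ) * ∑ i, p i * max (R i - ν) 0
          ≤ ν' + (1 / κ) * ∑ i, p i * max (R i - ν') 0) := by
  have hp₀ (i : Fin n) : 0 ≤ p i := (hp i).le
  obtain ⟨ν, hgt, hge⟩ := exists_upper_quantile p R hp₀ hκ0 (hsum ▸ hκ1)
  obtain ⟨w, hw_gt, hw_lt, hw, hw1⟩ :=
    exists_density_between p (monotone_filter_right _ fun _ _ => le_of_lt) hκ0 hgt hge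
  have heq : ∑ i, w i * p i * R i = cvarDual p R κ ν :=
    sum_mul_eq_cvarDual p R (fun i h => hw_gt i (by simpa using h))
      (fun i h => hw_lt i (by simpa using h)) hw1
  refine ⟨w, ν, hw, hw1,
    fun v hv hv1 => (sum_mul_le_cvarDual p R hp₀ hv hv1 ν).trans_eq heq.symm, heq,
    fun ν' => heq.symm.trans_le (sum_mul_le_cvarDual p R hp₀ hw hw1 ν')⟩
end

section
/- Let R be a real random variable on a finite probability space and κ ∈ (0,1]. The function g(ν) = ν + (1/κ)·E[(R - ν)₊] is convex in ν, and is minimized at any ν* satisfying P(R ≥ ν*) ≥ κ and P(R ≤ ν*) ≥ 1 - κ (i.e., at the (1-κ)-quantile of R). -/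
/-!
The map `ν ↦ (r - ν)₊` is convex, and both `-[r > ν]` and `-[r ≥ ν]` are subgradients of it
at `ν`: `(r - ν)₊ - (r - ν')₊ ≤ (ν' - ν)·[r > ν]`, and likewise with `[r ≥ ν]`. Averaging over
the outcomes, `E(R - ν*)₊ - E(R - ν)₊` is at most `(ν - ν*)·P(R > ν*)` and at most
`(ν - ν*)·P(R ≥ ν*)`. The quantile conditions say `P(R > ν*) ≤ κ ≤ P(R ≥ ν*)`, so the first
bound gives `κ (ν - ν*)` when `ν ≥ ν*` and the second when `ν ≤ ν*`.
-/

open Finset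

theorem ConvexOn.fun_sum {𝕜 E β ι : Type*} [Semiring 𝕜] [PartialOrder 𝕜] [AddCommMonoid E]
    [AddCommMonoid β] [PartialOrder β] [IsOrderedAddMonoid β] [SMul 𝕜 E] [Module 𝕜 β]
    {s : Set E} (hs : Convex 𝕜 s) {f : ι → E → β} (t : Finset ι)
    (hf : ∀ i ∈ t, ConvexOn 𝕜 s (f i)) :
    ConvexOn 𝕜 s fun x => ∑ i ∈ t, f i x := by
  classical
  induction t using Finset.induction_on with
  | empty => simpa using convexOn_const (0 : β) hs
  | insert a t ha ih =>
    simp only [Finset.sum_insert ha]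
    exact (hf a (mem_insert_self a t)).add (ih fun i hi => hf i (mem_insert_of_mem hi))

theorem convexOn_max_sub_zero (r : ℝ) : ConvexOn ℝ Set.univ fun ν : ℝ => max (r - ν) 0 :=
  ((convexOn_const r convex_univ).sub (concaveOn_id convex_univ)).sup (convexOn_const 0 convex_univ)

theorem max_sub_zero_sub_max_sub_zero_le_ite_lt (r a b : ℝ) :
    max (r - a) 0 - max (r - b) 0 ≤ if a < r then b - a else 0 := by
  split_ifs with h
  · rw [max_eq_left (by linarith)]
    linarith [le_max_left (r - b) 0]
  · rw [max_eq_right (by linarith)]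
    linarith [le_max_right (r - b) 0]

theorem max_sub_zero_sub_max_sub_zero_le_ite_le (r a b : ℝ) :
    max (r - a) 0 - max (r - b) 0 ≤ if a ≤ r then b - a else 0 := by
  split_ifs with h
  · rw [max_eq_left (by linarith)]
    linarith [le_max_left (r - b) 0]
  · rw [max_eq_right (by linarith)]
    linarith [le_max_right (r - b) 0]

section ExpectedShortfall

variable {ι : Type*} [Fintype ι] (p R : ι → ℝ)

theorem convexOn_sum_mul_max_sub_zero (hp : ∀ i, 0 ≤ p i) :
    ConvexOn ℝ Set.univ fun ν : ℝ => ∑ i, p i * max (R i - ν) 0 :=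
  ConvexOn.fun_sum convex_univ _ fun i _ => (convexOn_max_sub_zero (R i)).smul (hp i)

theorem sum_mul_max_sub_zero_sub_le_sum_filter_lt (hp : ∀ i, 0 ≤ p i) (a b : ℝ) :
    ∑ i, p i * max (R i - a) 0 - ∑ i, p i * max (R i - b) 0
      ≤ (∑ i ∈ univ.filter (fun i => a < R i), p i) * (b - a) := by
  rw [← sum_sub_distrib, sum_mul, sum_filter]
  refine sum_le_sum fun i _ => ?_
  calc p i * max (R i - a) 0 - p i * max (R i - b) 0
      = p i * (max (R i - a) 0 - max (R i - b) 0) := by ring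
    _ ≤ p i * if a < R i then b - a else 0 :=
        mul_le_mul_of_nonneg_left (max_sub_zero_sub_max_sub_zero_le_ite_lt _ a b) (hp i)
    _ = if a < R i then p i * (b - a) else 0 := by rw [mul_ite, mul_zero]

theorem sum_mul_max_sub_zero_sub_le_sum_filter_le (hp : ∀ i, 0 ≤ p i) (a b : ℝ) :
    ∑ i, p i * max (R i - a) 0 - ∑ i, p i * max (R i - b) 0
      ≤ (∑ i ∈ univ.filter (fun i => a ≤ R i), p i) * (b - a) := by
  rw [← sum_sub_distrib, sum_mul, sum_filter]
  refine sum_le_sum fun i _ => ?_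
  calc p i * max (R i - a) 0 - p i * max (R i - b) 0
      = p i * (max (R i - a) 0 - max (R i - b) 0) := by ring
    _ ≤ p i * if a ≤ R i then b - a else 0 :=
        mul_le_mul_of_nonneg_left (max_sub_zero_sub_max_sub_zero_le_ite_le _ a b) (hp i)
    _ = if a ≤ R i then p i * (b - a) else 0 := by rw [mul_ite, mul_zero]

theorem sum_filter_lt_eq_one_sub (hsum : ∑ i, p i = 1) (a : ℝ) :
    ∑ i ∈ univ.filter (fun i => a < R i), p i = 1 - ∑ i ∈ univ.filter (fun i => R i ≤ a), p i := by
  rw [← hsum, ← sum_filter_add_sum_filter_not univ (fun i => R i ≤ a) p]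
  simp only [not_le, add_sub_cancel_left]

theorem sum_mul_max_sub_zero_sub_le_mul_of_quantile (hp : ∀ i, 0 ≤ p i) (hsum : ∑ i, p i = 1)
    {κ q : ℝ} (hge : κ ≤ ∑ i ∈ univ.filter (fun i => q ≤ R i), p i)
    (hle : 1 - κ ≤ ∑ i ∈ univ.filter (fun i => R i ≤ q), p i) (ν : ℝ) :
    ∑ i, p i * max (R i - q) 0 - ∑ i, p i * max (R i - ν) 0 ≤ κ * (ν - q) := by
  rcases le_total q ν with h | h
  · calc _ ≤ (∑ i ∈ univ.filter (fun i => q < R i), p i) * (ν - q) :=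
          sum_mul_max_sub_zero_sub_le_sum_filter_lt p R hp q ν
      _ ≤ κ * (ν - q) := by
          rw [sum_filter_lt_eq_one_sub p R hsum]
          exact mul_le_mul_of_nonneg_right (by linarith) (by linarith)
  · calc _ ≤ (∑ i ∈ univ.filter (fun i => q ≤ R i), p i) * (ν - q) :=
          sum_mul_max_sub_zero_sub_le_sum_filter_le p R hp q ν
      _ ≤ κ * (ν - q) := mul_le_mul_of_nonpos_right hge (by linarith)

end ExpectedShortfall

theorem cvar_dual_convex_and_quantile_minimizer_general {n : ℕ}
    (p R : Fin n → ℝ) (hp : ∀ i, 0 < p i) (hsum : ∑ i, p i = 1)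
    (κ : ℝ) (hκ0 : 0 < κ) :
    ConvexOn ℝ Set.univ
      (fun ν : ℝ => ν + (1/κ) * ∑ i, p i * max (R i - ν) 0) ∧
    ∀ νstar : ℝ,
      κ ≤ ∑ i ∈ Finset.univ.filter (fun i => νstar ≤ R i), p i →
      1 - κ ≤ ∑ i ∈ Finset.univ.filter (fun i => R i ≤ νstar), p i →
      ∀ ν : ℝ,
        νstar + (1/κ) * ∑ i, p i * max (R i - νstar) 0
          ≤ ν + (1/κ) * ∑ i, p i * max (R i - ν) 0 := by
  have hp' : ∀ i, 0 ≤ p i := fun i => (hp i).le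
  refine ⟨(convexOn_id convex_univ).add
    ((convexOn_sum_mul_max_sub_zero p R hp').smul (by positivity)), ?_⟩
  intro νstar hge hle ν
  have hdiv := (div_le_iff₀' hκ0).mpr
    (sum_mul_max_sub_zero_sub_le_mul_of_quantile p R hp' hsum hge hle ν)
  rw [sub_div] at hdiv
  simp only [one_div_mul_eq_div]
  linarith

/-- on a finite probability space, the dual objective
`g(ν) = ν + (1/κ)·E[(R - ν)₊]` is convex in `ν`, and any `ν*` with
`P(R ≥ ν*) ≥ κ` and `P(R ≤ ν*) ≥ 1 - κ` (a `(1-κ)`-quantile) is a minimizer. -/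
theorem cvar_dual_convex_and_quantile_minimizer {n : ℕ}
    (p R : Fin n → ℝ) (hp : ∀ i, 0 < p i) (hsum : ∑ i, p i = 1)
    (κ : ℝ) (hκ0 : 0 < κ) (hκ1 : κ ≤ 1) :
    ConvexOn ℝ Set.univ
      (fun ν : ℝ => ν + (1/κ) * ∑ i, p i * max (R i - ν) 0) ∧
    ∀ νstar : ℝ,
      κ ≤ ∑ i ∈ Finset.univ.filter (fun i => νstar ≤ R i), p i →
      1 - κ ≤ ∑ i ∈ Finset.univ.filter (fun i => R i ≤ νstar), p i →
      ∀ ν : ℝ,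
        νstar + (1/κ) * ∑ i, p i * max (R i - νstar) 0
          ≤ ν + (1/κ) * ∑ i, p i * max (R i - ν) 0 :=
  cvar_dual_convex_and_quantile_minimizer_general p R hp hsum κ hκ0
end
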